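/- Define c̄_r(n) = ∑_{d | gcd(n,r)} d·μ̄_r(r/d), where μ̄_r is the multiplicative function (in its argument) determined by μ̄_r ∗ 1 = g_r, with g_r the characteristic function of the unitary divisors of r. Then for coprime positive integers m, n: c̄_r(m)·c̄_r(n) = μ̄(r)·c̄_r(mn), where μ̄(r) = 1 if r = 1 or r is squareful (every prime dividing r divides it at least twice) and μ̄(r) = 0 otherwise. -/

import Mathlib

/-!
Both sides are multiplicative in `r`: `g_r` and `μ̄_r` are jointly multiplicative in `(r, d)` on
divisors, hence `c̄_{r₁r₂}(n) = c̄_{r₁}(n) c̄_{r₂}(n)` for coprime `r₁, r₂`, and squarefulness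
splits over coprime factors. So it suffices to take `r = p ^ k`. As `m` and `n` are coprime, `p`
misses one of them, say `m`; then `c̄_{p^k}(m) = μ̄_{p^k}(p^k) = 1 + μ(p^k)`, which is `0` for
`k = 1` and `1` otherwise, while `c̄_{p^k}(mn) = c̄_{p^k}(n)`. For `r = 0` both sides vanish,
since `μ̄_0(0)` is an empty sum.
-/

/-- `g_r`: the characteristic function of the unitary divisors of `r`. -/
noncomputable def unitaryChar (r n : ℕ) : ℂ :=
  if n ∣ r ∧ Nat.Coprime n (r / n) then 1 else 0

open ArithmeticFunction in
/-- `μ̄_r`, defined by Möbius inversion from `μ̄_r ∗ 1 = g_r`. -/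
noncomputable def mubar (r n : ℕ) : ℂ :=
  ∑ d ∈ n.divisors, unitaryChar r d * (moebius (n / d) : ℤ)

/-- The analogue of Ramanujan's sum with respect to regular integers (mod `r`):
`c̄_r(n) = ∑_{d ∣ gcd(n,r)} d · μ̄_r(r/d)`. -/
noncomputable def ramanujanBar (r n : ℕ) : ℂ :=
  ∑ d ∈ (Nat.gcd n r).divisors, (d : ℂ) * mubar r (r / d)

open Finset ArithmeticFunction

theorem Nat.Coprime.sum_divisors_mul_eq_sum_sum {M : Type*} [AddCommMonoid M] {a b : ℕ}
    (hab : a.Coprime b) (f : ℕ → M) :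
    ∑ d ∈ (a * b).divisors, f d = ∑ x ∈ a.divisors, ∑ y ∈ b.divisors, f (x * y) := by
  rw [hab.divisors_mul, sum_map]
  exact (sum_attach (a.divisors ×ˢ b.divisors) fun p => f (p.1 * p.2)).trans (sum_product ..)

def Nat.Squareful (r : ℕ) : Prop :=
  ∀ p ∈ r.primeFactors, p ^ 2 ∣ r

instance : DecidablePred Nat.Squareful :=
  fun r => inferInstanceAs (Decidable (∀ p ∈ r.primeFactors, p ^ 2 ∣ r))

theorem Nat.Coprime.squareful_mul_iff {a b : ℕ} (h : a.Coprime b) :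
    (a * b).Squareful ↔ a.Squareful ∧ b.Squareful := by
  have left : ∀ p ∈ a.primeFactors, p ^ 2 ∣ a * b ↔ p ^ 2 ∣ a := fun p hp =>
    ((h.coprime_dvd_left (Nat.dvd_of_mem_primeFactors hp)).pow_left 2).dvd_mul_right
  have right : ∀ p ∈ b.primeFactors, p ^ 2 ∣ a * b ↔ p ^ 2 ∣ b := fun p hp =>
    ((h.symm.coprime_dvd_left (Nat.dvd_of_mem_primeFactors hp)).pow_left 2).dvd_mul_left
  simp only [Nat.Squareful, h.primeFactors_mul, forall_mem_union]
  exact and_congr (forall₂_congr left) (forall₂_congr right)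

theorem Nat.Prime.squareful_pow_iff {p : ℕ} (hp : p.Prime) (k : ℕ) :
    (p ^ k).Squareful ↔ k ≠ 1 := by
  rcases eq_or_ne k 0 with rfl | hk
  · simp [Nat.Squareful]
  · simp only [Nat.Squareful, Nat.primeFactors_prime_pow hk hp, mem_singleton, forall_eq,
      Nat.pow_dvd_pow_iff_le_right hp.one_lt]
    omega

theorem unitaryChar_mul {r₁ r₂ d₁ d₂ : ℕ} (hr : r₁.Coprime r₂) (hd₁ : d₁ ∣ r₁) (hd₂ : d₂ ∣ r₂) :
    unitaryChar (r₁ * r₂) (d₁ * d₂) = unitaryChar r₁ d₁ * unitaryChar r₂ d₂ := by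
  have c₁₂ : d₁.Coprime (r₂ / d₂) :=
    (hr.coprime_dvd_left hd₁).coprime_dvd_right (Nat.div_dvd_of_dvd hd₂)
  have c₂₁ : d₂.Coprime (r₁ / d₁) :=
    (hr.symm.coprime_dvd_left hd₂).coprime_dvd_right (Nat.div_dvd_of_dvd hd₁)
  simp only [unitaryChar, ← Nat.div_mul_div_comm hd₁ hd₂, mul_dvd_mul hd₁ hd₂, hd₁, hd₂,
    Nat.coprime_mul_iff_left, Nat.coprime_mul_iff_right, eq_true c₁₂, eq_true c₂₁, true_and, and_true,
    ite_zero_mul_ite_zero, one_mul]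

theorem unitaryChar_prime_pow {p k i : ℕ} (hp : p.Prime) (hi : i ≤ k) :
    unitaryChar (p ^ k) (p ^ i) = if i = 0 ∨ i = k then 1 else 0 := by
  have hcop : (p ^ i).Coprime (p ^ (k - i)) ↔ i = 0 ∨ i = k := by
    rcases eq_or_ne i 0 with rfl | hi₀
    · simp
    rcases eq_or_ne i k with rfl | hik
    · simp
    rw [Nat.coprime_pow_left_iff (by omega), Nat.coprime_pow_right_iff (by omega),
      Nat.coprime_self]
    simp [hp.ne_one, hi₀, hik]
  simp only [unitaryChar, pow_dvd_pow p hi, Nat.pow_div hi hp.pos, hcop, true_and]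

theorem mubar_mul {r₁ r₂ e₁ e₂ : ℕ} (hr : r₁.Coprime r₂) (he₁ : e₁ ∣ r₁) (he₂ : e₂ ∣ r₂) :
    mubar (r₁ * r₂) (e₁ * e₂) = mubar r₁ e₁ * mubar r₂ e₂ := by
  rw [mubar, ((hr.coprime_dvd_left he₁).coprime_dvd_right he₂).sum_divisors_mul_eq_sum_sum,
    mubar, mubar, sum_mul_sum]
  refine sum_congr rfl fun x hx => sum_congr rfl fun y hy => ?_
  rw [Nat.mem_divisors] at hx hy
  have hq : (e₁ / x).Coprime (e₂ / y) :=
    (hr.coprime_dvd_left ((Nat.div_dvd_of_dvd hx.1).trans he₁)).coprime_dvd_right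
      ((Nat.div_dvd_of_dvd hy.1).trans he₂)
  rw [unitaryChar_mul hr (hx.1.trans he₁) (hy.1.trans he₂), ← Nat.div_mul_div_comm hx.1 hy.1,
    isMultiplicative_moebius.map_mul_of_coprime hq]
  push_cast
  ring

theorem mubar_prime_pow_self {p : ℕ} (hp : p.Prime) (k : ℕ) :
    mubar (p ^ k) (p ^ k) = if k = 1 then 0 else 1 := by
  rcases eq_or_ne k 0 with rfl | hk
  · simp [mubar, unitaryChar]
  -- only the unitary divisors `1` and `p ^ k` contribute
  rw [mubar, Nat.sum_divisors_prime_pow hp,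
    sum_eq_add_of_mem 0 k (by simp) (by simp) hk.symm fun i hi hi' => ?_]
  · rw [unitaryChar_prime_pow hp (Nat.zero_le k), unitaryChar_prime_pow hp le_rfl, pow_zero,
      Nat.div_one, Nat.div_self (pow_pos hp.pos k), moebius_apply_prime_pow hp hk]
    split_ifs <;> simp_all
  · rw [unitaryChar_prime_pow hp (Nat.lt_succ_iff.1 (mem_range.1 hi)), if_neg (by tauto), zero_mul]

theorem ramanujanBar_zero_left (n : ℕ) : ramanujanBar 0 n = 0 := by
  simp [ramanujanBar, mubar]

theorem ramanujanBar_of_coprime {r n : ℕ} (h : n.Coprime r) : ramanujanBar r n = mubar r r := by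
  simp [ramanujanBar, Nat.Coprime.gcd_eq_one h]

theorem ramanujanBar_mul_of_coprime_left {r m : ℕ} (h : m.Coprime r) (n : ℕ) :
    ramanujanBar r (m * n) = ramanujanBar r n := by
  rw [ramanujanBar, h.gcd_mul_left_cancel, ramanujanBar]

theorem ramanujanBar_mul {r₁ r₂ : ℕ} (hr : r₁.Coprime r₂) (n : ℕ) :
    ramanujanBar (r₁ * r₂) n = ramanujanBar r₁ n * ramanujanBar r₂ n := by
  have hg : (n.gcd r₁).Coprime (n.gcd r₂) :=
    (hr.coprime_dvd_left (Nat.gcd_dvd_right _ _)).coprime_dvd_right (Nat.gcd_dvd_right _ _)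
  rw [ramanujanBar, hr.gcd_mul n, hg.sum_divisors_mul_eq_sum_sum, ramanujanBar, ramanujanBar,
    sum_mul_sum]
  refine sum_congr rfl fun x hx => sum_congr rfl fun y hy => ?_
  have hx₁ : x ∣ r₁ := (Nat.dvd_of_mem_divisors hx).trans (Nat.gcd_dvd_right _ _)
  have hy₂ : y ∣ r₂ := (Nat.dvd_of_mem_divisors hy).trans (Nat.gcd_dvd_right _ _)
  rw [← Nat.div_mul_div_comm hx₁ hy₂, mubar_mul hr (Nat.div_dvd_of_dvd hx₁)
    (Nat.div_dvd_of_dvd hy₂)]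
  push_cast
  ring

theorem ramanujanBar_mul_ramanujanBar (r : ℕ) {m n : ℕ} (h : m.Coprime n) :
    ramanujanBar r m * ramanujanBar r n =
      (if r.Squareful then 1 else 0) * ramanujanBar r (m * n) := by
  induction r using Nat.recOnPrimeCoprime with
  | zero => simp [ramanujanBar_zero_left]
  | prime_pow p k hp =>
    have of_not_dvd : ∀ a b, ¬p ∣ a → ramanujanBar (p ^ k) a * ramanujanBar (p ^ k) b =
        (if (p ^ k).Squareful then 1 else 0) * ramanujanBar (p ^ k) (a * b) := by
      intro a b ha
      have hco : a.Coprime (p ^ k) := ((hp.coprime_iff_not_dvd.2 ha).symm).pow_right k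
      simp only [ramanujanBar_of_coprime hco, ramanujanBar_mul_of_coprime_left hco,
        mubar_prime_pow_self hp, hp.squareful_pow_iff, ite_not]
    by_cases hm : p ∣ m
    · have hn : ¬p ∣ n := hp.coprime_iff_not_dvd.1 (h.coprime_dvd_left hm)
      rw [mul_comm, mul_comm m, of_not_dvd n m hn]
    · exact of_not_dvd m n hm
  | coprime a b _ _ hab iha ihb =>
    rw [ramanujanBar_mul hab, ramanujanBar_mul hab, ramanujanBar_mul hab, mul_mul_mul_comm,
      iha, ihb, mul_mul_mul_comm, ite_zero_mul_ite_zero, one_mul,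
      if_congr hab.squareful_mul_iff rfl rfl]

theorem ramanujanBar_quasimult_general (r m n : ℕ) (h : Nat.Coprime m n) :
    ramanujanBar r m * ramanujanBar r n =
      (if r = 1 ∨ ∀ p ∈ r.primeFactors, p ^ 2 ∣ r then (1 : ℂ) else 0) *
        ramanujanBar r (m * n) := by
  have hsq : (r = 1 ∨ ∀ p ∈ r.primeFactors, p ^ 2 ∣ r) ↔ r.Squareful :=
    or_iff_right_of_imp fun hr => by simp [hr]
  rw [ramanujanBar_mul_ramanujanBar r h, if_congr hsq rfl rfl]

theorem ramanujanBar_quasimult (r m n : ℕ) (hr : 0 < r) (hm : 0 < m) (hn : 0 < n)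
    (h : Nat.Coprime m n) :
    ramanujanBar r m * ramanujanBar r n =
      (if r = 1 ∨ ∀ p ∈ r.primeFactors, p ^ 2 ∣ r then (1 : ℂ) else 0) *
        ramanujanBar r (m * n) :=
  ramanujanBar_quasimult_general r m n h
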